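/- arXiv:1612.09487 — 5 statements merged into one kernel-verified Lean document; each statement's English description precedes it below -/
import Mathlib

section
/- Let H ⊆ 2^V be a union-closed hypergraph (∅ ∈ H, and A,B ∈ H implies A ∪ B ∈ H). Then a simplicial complex K ⊆ 2^V is (r+s-1, s)-unavoidable relative to H if and only if it is r-unavoidable relative to H. -/
open Finset

variable {V : Type*} [DecidableEq V] [Fintype V]

/-- A simplicial complex on the ground set `S`. -/
def IsComplexOn (S : Finset V) (K : Set (Finset V)) : Prop :=
  (∅ : Finset V) ∈ K ∧ (∀ A ∈ K, A ⊆ S) ∧ ∀ A B : Finset V, A ⊆ B → B ∈ K → A ∈ K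

/-- `K` is `r`-unavoidable on the ground set `S`. -/
def UnavoidableOn (S : Finset V) (r : ℕ) (K : Set (Finset V)) : Prop :=
  ∀ A : Fin r → Finset V,
    (∀ i j, i ≠ j → Disjoint (A i) (A j)) →
    Finset.univ.biUnion A = S →
    ∃ i, A i ∈ K

/-- The partition number of `K` on the ground set `S`. -/
noncomputable def partitionNumberOn (S : Finset V) (K : Set (Finset V)) : ℕ :=
  sInf {r | 0 < r ∧ UnavoidableOn S r K}

/-- The join of complexes `Ks j`. -/
def joinOf (n : ℕ) (Ks : Fin n → Set (Finset V)) : Set (Finset V) :=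
  {A | ∃ B : Fin n → Finset V, (∀ j, B j ∈ Ks j) ∧ A = Finset.univ.biUnion B}

/-- `μ` is a probability measure on the ground set `S`. -/
def ProbOn (S : Finset V) (μ : V → ℝ) : Prop :=
  (∀ v, 0 ≤ μ v) ∧ ∑ v ∈ S, μ v = 1

/-- The sub-level (threshold) complex `K_{μ ≤ α}` on the ground set `S`. -/
def sublevel (S : Finset V) (μ : V → ℝ) (α : ℝ) : Set (Finset V) :=
  {A | A ⊆ S ∧ ∑ v ∈ A, μ v ≤ α}

/-- Threshold characteristic (real-valued version). -/
noncomputable def rhoR (S : Finset V) (K : Set (Finset V)) : ℝ :=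
  sSup {α : ℝ | 0 ≤ α ∧ ∃ μ : V → ℝ, ProbOn S μ ∧ sublevel S μ α ⊆ K}

/-- Threshold characteristic (extended-real-valued version; `+∞` iff `K = 2^S`). -/
noncomputable def rhoE (S : Finset V) (K : Set (Finset V)) : EReal :=
  sSup {x : EReal | ∃ α : ℝ, x = (α : EReal) ∧ 0 ≤ α ∧
    ∃ μ : V → ℝ, ProbOn S μ ∧ sublevel S μ α ⊆ K}

/-- `K` is `(n,s)`-unavoidable relative to the hypergraph `H`. -/
def RelUnavoidable (H K : Set (Finset V)) (n s : ℕ) : Prop :=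
  ∀ A : Fin n → Finset V, (∀ i, A i ∈ H) →
    (∀ i j, i ≠ j → Disjoint (A i) (A j)) →
    s ≤ {i | A i ∈ K}.ncard

theorem relUnavoidable_iff_of_unionClosed (H K : Set (Finset V))
    (hempty : (∅ : Finset V) ∈ H) (hunion : ∀ A ∈ H, ∀ B ∈ H, A ∪ B ∈ H)
    (r s : ℕ) (hs : 1 ≤ s) :
    RelUnavoidable H K (r + s - 1) s ↔
      ∀ A : Fin r → Finset V, (∀ i, A i ∈ H) →
        (∀ i j, i ≠ j → Disjoint (A i) (A j)) → ∃ i, A i ∈ K := by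

  classical
  have hn : r + s - 1 = r + (s - 1) := by omega
  constructor
  · intro h A hA hdisj
    set B : Fin (r + s - 1) → Finset V := fun i =>
      if hi : (i : ℕ) < r then A ⟨i, hi⟩ else ∅ with hBdef
    have hBH : ∀ i, B i ∈ H := by
      intro i
      simp only [hBdef]
      split
      · exact hA _
      · exact hempty
    have hBdisj : ∀ i j, i ≠ j → Disjoint (B i) (B j) := by
      intro i j hij
      simp only [hBdef]
      split <;> split
      · apply hdisj
        intro hc
        exact hij (Fin.ext (by simpa using congrArg Fin.val hc))
      · exact Finset.disjoint_empty_right _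
      · exact Finset.disjoint_empty_left _
      · exact Finset.disjoint_empty_left _
    have hcard := h B hBH hBdisj
    by_contra hcon
    push_neg at hcon
    -- every i with B i ∈ K has r ≤ i
    have hsub : {i : Fin (r + s - 1) | B i ∈ K} ⊆
        Set.range (fun j : Fin (s - 1) => (⟨r + j, by omega⟩ : Fin (r + s - 1))) := by
      intro i hi
      by_cases hir : (i : ℕ) < r
      · exfalso
        have : B i = A ⟨i, hir⟩ := by simp [hBdef, hir]
        exact hcon ⟨i, hir⟩ (this ▸ hi)
      · refine ⟨⟨(i : ℕ) - r, by omega⟩, ?_⟩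
        apply Fin.ext
        simp
        omega
    have hle : {i : Fin (r + s - 1) | B i ∈ K}.ncard ≤ s - 1 := by
      calc {i : Fin (r + s - 1) | B i ∈ K}.ncard
          ≤ (Set.range (fun j : Fin (s - 1) =>
              (⟨r + j, by omega⟩ : Fin (r + s - 1)))).ncard :=
            Set.ncard_le_ncard hsub (Set.toFinite _)
        _ ≤ (Set.univ : Set (Fin (s - 1))).ncard := by
            rw [← Set.image_univ]
            exact Set.ncard_image_le (Set.toFinite _)
        _ = s - 1 := by simp [Set.ncard_univ]
    omega
  · intro h A hA hdisj
    by_contra hcon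
    push_neg at hcon
    have hr : 0 < r := by
      rcases Nat.eq_zero_or_pos r with hr0 | hr0
      · exfalso
        subst hr0
        obtain ⟨i, _⟩ := h Fin.elim0 (fun i => i.elim0) (fun i => i.elim0)
        exact i.elim0
      · exact hr0
    -- count indices not in K
    have hkey : {i : Fin (r + s - 1) | A i ∈ K}.ncard =
        (Finset.univ.filter (fun i => A i ∈ K)).card := by
      rw [Set.ncard_eq_toFinset_card']
      congr 1
      ext i
      simp
    have hbad : r ≤ (Finset.univ.filter (fun i : Fin (r + s - 1) => A i ∉ K)).card := by
      have h1 : (Finset.univ.filter (fun i : Fin (r + s - 1) => A i ∈ K)).card +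
          (Finset.univ.filter (fun i : Fin (r + s - 1) => A i ∉ K)).card = r + s - 1 := by
        rw [Finset.card_filter_add_card_filter_not]
        simp
      omega
    obtain ⟨T, hTsub, hTcard⟩ := Finset.exists_subset_card_eq hbad
    set e := T.equivFinOfCardEq hTcard with he
    set C : Fin r → Finset V := fun j => A (e.symm j) with hC
    have hCH : ∀ j, C j ∈ H := fun j => hA _
    have hCdisj : ∀ i j, i ≠ j → Disjoint (C i) (C j) := by
      intro i j hij
      apply hdisj
      intro hc
      apply hij
      have : e.symm i = e.symm j := Subtype.ext hc
      exact e.symm.injective this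
    obtain ⟨j, hj⟩ := h C hCH hCdisj
    have : ((e.symm j : T) : Fin (r + s - 1)) ∈ T := (e.symm j).2
    have hmem := hTsub this
    simp only [Finset.mem_filter] at hmem
    exact hmem.2 hj
end

section
/- For simplicial complexes K₁,...,K_n on disjoint vertex sets, π(K₁ * ... * K_n) ≤ π(K₁) + ... + π(K_n) − n + 1. -/
open Finset

variable {V : Type*} [DecidableEq V] [Fintype V]

set_option linter.unusedSectionVars false

-- test lemma: unavoidable at card+1
lemma unavoidable_card_succ (S : Finset V) (K : Set (Finset V)) (h0 : (∅ : Finset V) ∈ K) :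
    UnavoidableOn S (S.card + 1) K := by
  intro A hd hu
  by_contra h
  push_neg at h
  have hne : ∀ i, A i ≠ ∅ := fun i hi => h i (hi ▸ h0)
  have hcard : (Finset.univ.biUnion A).card = ∑ i, (A i).card := by
    apply Finset.card_biUnion
    intro i _ j _ hij
    exact hd i j hij
  have : S.card + 1 ≤ ∑ i : Fin (S.card + 1), (A i).card := by
    calc S.card + 1 = ∑ _i : Fin (S.card + 1), 1 := by simp
    _ ≤ _ := Finset.sum_le_sum fun i _ => Finset.card_pos.2 (Finset.nonempty_iff_ne_empty.2 (hne i))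
  rw [← hcard, hu] at this
  omega

lemma partitionNumber_spec (S : Finset V) (K : Set (Finset V)) (h0 : (∅ : Finset V) ∈ K) :
    0 < partitionNumberOn S K ∧ UnavoidableOn S (partitionNumberOn S K) K := by
  have hne : {r | 0 < r ∧ UnavoidableOn S r K}.Nonempty :=
    ⟨S.card + 1, Nat.succ_pos _, unavoidable_card_succ S K h0⟩
  exact Nat.sInf_mem hne

open Classical in
lemma bad_card_lt {S : Finset V} {K : Set (Finset V)} (hcx : IsComplexOn S K)
    {R : ℕ} (A : Fin R → Finset V) (hd : ∀ i j, i ≠ j → Disjoint (A i) (A j))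
    {r : ℕ} (hr : 0 < r) (hun : UnavoidableOn S r K) :
    (Finset.univ.filter (fun i => A i ∩ S ∉ K)).card < r := by
  by_contra hc
  push_neg at hc
  obtain ⟨m, rfl⟩ : ∃ m, r = m + 1 := ⟨r - 1, by omega⟩
  obtain ⟨t, hts, htc⟩ := Finset.exists_subset_card_eq hc
  set e : Fin (m + 1) ≃o {x // x ∈ t} := t.orderIsoOfFin htc with he
  have hinj : ∀ k k' : Fin (m + 1), k ≠ k' → (e k : Fin R) ≠ (e k' : Fin R) := by
    intro k k' hkk' h
    exact hkk' (e.injective (Subtype.ext h))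
  have hbad : ∀ k : Fin (m + 1), A (e k : Fin R) ∩ S ∉ K := by
    intro k
    have := hts (e k).2
    simpa using this
  set X : Finset V := Finset.univ.biUnion (fun l : Fin m => A (e l.succ : Fin R) ∩ S) with hX
  set D : Fin (m + 1) → Finset V :=
    fun k => if k = 0 then S \ X else A (e k : Fin R) ∩ S with hD
  have hXS : X ⊆ S := by
    intro x hx
    simp only [hX, Finset.mem_biUnion] at hx
    obtain ⟨l, _, hl⟩ := hx
    exact (Finset.mem_inter.1 hl).2
  have hsubX : ∀ k : Fin (m + 1), k ≠ 0 → A (e k : Fin R) ∩ S ⊆ X := by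
    intro k hk x hx
    simp only [hX, Finset.mem_biUnion]
    refine ⟨k.pred hk, Finset.mem_univ _, ?_⟩
    rwa [Fin.succ_pred]
  have hDdisj : ∀ k k' : Fin (m + 1), k ≠ k' → Disjoint (D k) (D k') := by
    intro k k' hkk'
    simp only [hD]
    by_cases h1 : k = 0 <;> by_cases h2 : k' = 0 <;> simp [h1, h2]
    · exact absurd (h1.trans h2.symm) hkk'
    · exact (Finset.sdiff_disjoint).mono_right (hsubX k' h2)
    · exact (Finset.sdiff_disjoint.mono_right (hsubX k h1)).symm
    · exact ((hd _ _ (hinj k k' hkk')).mono Finset.inter_subset_left Finset.inter_subset_left)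
  have hDu : Finset.univ.biUnion D = S := by
    apply Finset.Subset.antisymm
    · intro x hx
      simp only [Finset.mem_biUnion] at hx
      obtain ⟨k, _, hk⟩ := hx
      simp only [hD] at hk
      split at hk
      · exact (Finset.mem_sdiff.1 hk).1
      · exact (Finset.mem_inter.1 hk).2
    · intro x hx
      simp only [Finset.mem_biUnion]
      by_cases hxX : x ∈ X
      · simp only [hX, Finset.mem_biUnion] at hxX
        obtain ⟨l, _, hl⟩ := hxX
        refine ⟨l.succ, Finset.mem_univ _, ?_⟩
        simp only [hD, if_neg (Fin.succ_ne_zero l)]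
        exact hl
      · exact ⟨0, Finset.mem_univ _, by simp [hD, Finset.mem_sdiff, hx, hxX]⟩
  obtain ⟨k, hk⟩ := hun D hDdisj hDu
  by_cases hk0 : k = 0
  · subst hk0
    simp only [hD, if_pos rfl] at hk
    have hsub : A (e (0 : Fin (m + 1)) : Fin R) ∩ S ⊆ S \ X := by
      intro x hx
      rw [Finset.mem_sdiff]
      refine ⟨(Finset.mem_inter.1 hx).2, ?_⟩
      intro hxX
      simp only [hX, Finset.mem_biUnion] at hxX
      obtain ⟨l, _, hl⟩ := hxX
      have hne : (e (0 : Fin (m + 1)) : Fin R) ≠ (e l.succ : Fin R) :=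
        hinj _ _ (Fin.succ_ne_zero l).symm
      exact Finset.notMem_empty x ((hd _ _ hne).le_bot (Finset.mem_inter.2 ⟨(Finset.mem_inter.1 hx).1, (Finset.mem_inter.1 hl).1⟩))
    exact hbad 0 (hcx.2.2 _ _ hsub hk)
  · simp only [hD, if_neg hk0] at hk
    exact hbad k hk

theorem pi_join_le (n : ℕ) (Vs : Fin n → Finset V)
    (hdisj : ∀ i j, i ≠ j → Disjoint (Vs i) (Vs j))
    (Ks : Fin n → Set (Finset V)) (hcx : ∀ j, IsComplexOn (Vs j) (Ks j)) :
    partitionNumberOn (Finset.univ.biUnion Vs) (joinOf n Ks) ≤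
      (∑ j, partitionNumberOn (Vs j) (Ks j)) - n + 1 := by
  classical
  set r : Fin n → ℕ := fun j => partitionNumberOn (Vs j) (Ks j) with hr
  set R : ℕ := (∑ j, r j) - n + 1 with hR
  have hspec : ∀ j, 0 < r j ∧ UnavoidableOn (Vs j) (r j) (Ks j) :=
    fun j => partitionNumber_spec (Vs j) (Ks j) (hcx j).1
  have hunav : UnavoidableOn (Finset.univ.biUnion Vs) R (joinOf n Ks) := by
    intro A hd hu
    -- find a universally good index
    have hbad : ∀ j, (Finset.univ.filter (fun i : Fin R => A i ∩ Vs j ∉ Ks j)).card < r j :=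
      fun j => bad_card_lt (hcx j) A hd (hspec j).1 (hspec j).2
    have hgood : ∃ i : Fin R, ∀ j, A i ∩ Vs j ∈ Ks j := by
      by_contra h
      push_neg at h
      have hcov : (Finset.univ : Finset (Fin R)) ⊆
          Finset.univ.biUnion (fun j => Finset.univ.filter (fun i : Fin R => A i ∩ Vs j ∉ Ks j)) := by
        intro i _
        obtain ⟨j, hj⟩ := h i
        exact Finset.mem_biUnion.2 ⟨j, Finset.mem_univ _, Finset.mem_filter.2 ⟨Finset.mem_univ _, hj⟩⟩
      have h1 : R ≤ ∑ j, (Finset.univ.filter (fun i : Fin R => A i ∩ Vs j ∉ Ks j)).card := by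
        calc R = (Finset.univ : Finset (Fin R)).card := by simp
        _ ≤ _ := (Finset.card_le_card hcov).trans (Finset.card_biUnion_le)
      have h2 : ∑ j, (Finset.univ.filter (fun i : Fin R => A i ∩ Vs j ∉ Ks j)).card ≤
          ∑ j, (r j - 1) := Finset.sum_le_sum fun j _ => by have := hbad j; omega
      have h3 : ∑ j, (r j - 1) + n = ∑ j, r j := by
        have : ∑ j : Fin n, (r j - 1 + 1) = ∑ j, r j :=
          Finset.sum_congr rfl fun j _ => by have := (hspec j).1; omega
        calc ∑ j, (r j - 1) + n = ∑ j : Fin n, (r j - 1 + 1) := by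
              rw [Finset.sum_add_distrib]; simp
        _ = _ := this
      have hR' : R = ∑ j, r j - n + 1 := hR
      omega
    obtain ⟨i, hi⟩ := hgood
    refine ⟨i, fun j => A i ∩ Vs j, hi, ?_⟩
    have hiT : A i ⊆ Finset.univ.biUnion Vs := hu ▸ Finset.subset_biUnion_of_mem A (Finset.mem_univ i)
    apply Finset.Subset.antisymm
    · intro x hx
      obtain ⟨j, _, hj⟩ := Finset.mem_biUnion.1 (hiT hx)
      exact Finset.mem_biUnion.2 ⟨j, Finset.mem_univ _, Finset.mem_inter.2 ⟨hx, hj⟩⟩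
    · intro x hx
      obtain ⟨j, _, hj⟩ := Finset.mem_biUnion.1 hx
      exact (Finset.mem_inter.1 hj).1
  exact Nat.sInf_le ⟨Nat.succ_pos _, hunav⟩
end

section
/- If K is a 2-unavoidable simplicial complex, then the join of n copies of K is (n+1)-unavoidable. -/
open Finset

variable {V : Type*} [DecidableEq V] [Fintype V]

theorem join_copies_of_two_unavoidable (K : Set (Finset V))
    (hK : IsComplexOn Finset.univ K)
    (h2 : UnavoidableOn Finset.univ 2 K) (n : ℕ) :
    UnavoidableOn (Finset.univ : Finset (V × Fin n)) (n + 1)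
      {A | ∃ B : Fin n → Finset V, (∀ j, B j ∈ K) ∧
        A = Finset.univ.biUnion (fun j => (B j).image (fun v => (v, j)))} := by
  intro A hdisj hcover
  classical
  set B : Fin (n + 1) → Fin n → Finset V :=
    fun i j => Finset.univ.filter (fun v => (v, j) ∈ A i) with hB
  have hmem : ∀ i j v, v ∈ B i j ↔ (v, j) ∈ A i := by
    intro i j v; simp [hB]
  have hcomp : ∀ C : Finset V, C ∉ K → Cᶜ ∈ K := by
    intro C hC
    have hd : ∀ i j : Fin 2, i ≠ j → Disjoint (![C, Cᶜ] i) (![C, Cᶜ] j) := by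
      intro i j hij
      fin_cases i <;> fin_cases j <;>
        simp_all [Finset.disjoint_left, Finset.mem_compl]
    have hc : Finset.univ.biUnion ![C, Cᶜ] = Finset.univ := by
      ext v; simp only [Finset.mem_biUnion, Finset.mem_univ, true_and, iff_true]
      by_cases h : v ∈ C
      · exact ⟨0, by simpa using h⟩
      · exact ⟨1, by simpa using h⟩
    obtain ⟨i, hi⟩ := h2 ![C, Cᶜ] hd hc
    fin_cases i
    · exact absurd hi hC
    · exact hi
  have key : ∀ (j : Fin n) (i i' : Fin (n + 1)), i ≠ i' → B i j ∉ K → B i' j ∈ K := by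
    intro j i i' hii hbad
    refine hK.2.2 _ _ ?_ (hcomp _ hbad)
    intro v hv
    rw [Finset.mem_compl, hmem]
    exact fun h => (Finset.disjoint_left.mp (hdisj i i' hii)) h ((hmem i' j v).mp hv)
  have hgood : ∃ i, ∀ j, B i j ∈ K := by
    by_contra hcon
    push_neg at hcon
    choose f hf using hcon
    have hinj : Function.Injective f := by
      intro i i' h
      by_contra hne
      exact (hf i') (key (f i') i i' hne (h ▸ hf i))
    have := Fintype.card_le_of_injective f hinj
    simp at this
  obtain ⟨i, hi⟩ := hgood
  refine ⟨i, B i, hi, ?_⟩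
  ext p
  obtain ⟨v, j⟩ := p
  simp only [Finset.mem_biUnion, Finset.mem_univ, Finset.mem_image, true_and]
  constructor
  · intro h; exact ⟨j, v, (hmem i j v).mpr h, rfl⟩
  · rintro ⟨j', w, hw, heq⟩
    rw [← heq]
    exact (hmem i j' w).mp hw
end

section
/- For a simplicial complex K ⊆ 2^[n] and an integer r ≥ 1: if 1/r < ρ(K) then π(K) ≤ r. Equivalently, π(K) − 1 ≤ ⌊1/ρ(K)⌋. -/
open Finset

variable {V : Type*} [DecidableEq V] [Fintype V]

theorem pi_le_of_lt_rho (n : ℕ) (K : Set (Finset (Fin n)))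
    (hK : IsComplexOn Finset.univ K) (r : ℕ) (hr : 1 ≤ r)
    (h : ((1 / (r : ℝ) : ℝ) : EReal) < rhoE Finset.univ K) :
    partitionNumberOn Finset.univ K ≤ r := by
  obtain ⟨x, hx, hlt⟩ := lt_sSup_iff.mp h
  obtain ⟨α, rfl, hα0, μ, hμ, hsub⟩ := hx
  have hra : (1 / (r : ℝ)) < α := by exact_mod_cast hlt
  apply Nat.sInf_le
  refine ⟨hr, fun A hdisj hcover => ?_⟩
  have hsum : ∑ i : Fin r, ∑ v ∈ A i, μ v = 1 := by
    rw [← Finset.sum_biUnion]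
    · rw [hcover]; exact hμ.2
    · intro i _ j _ hij
      exact hdisj i j hij
  have hrpos : (0:ℝ) < r := by positivity
  have : ∃ i ∈ (Finset.univ : Finset (Fin r)), ∑ v ∈ A i, μ v ≤ 1 / r := by
    by_contra hcon
    push_neg at hcon
    have : (1:ℝ) < ∑ i : Fin r, ∑ v ∈ A i, μ v := by
      calc (1:ℝ) = ∑ _i : Fin r, 1 / (r:ℝ) := by
            simp [Finset.sum_const, mul_one_div]
            field_simp
        _ < ∑ i : Fin r, ∑ v ∈ A i, μ v := by
            apply Finset.sum_lt_sum_of_nonempty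
            · exact Finset.univ_nonempty_iff.mpr ⟨⟨0, hr⟩⟩
            · intro i _; exact hcon i (Finset.mem_univ i)
    linarith
  obtain ⟨i, _, hi⟩ := this
  exact ⟨i, hsub ⟨Finset.subset_univ _, le_of_lt (lt_of_le_of_lt hi hra)⟩⟩
end

section
/- For simplicial complexes K₁,...,K_n on disjoint vertex sets, ρ(K₁ * ... * K_n) ≤ (1/n) · max{ρ(K₁),...,ρ(K_n)}. In particular ρ(K^{*n}) ≤ ρ(K)/n. -/
open Finset

variable {V : Type*} [DecidableEq V] [Fintype V]

lemma join_subset_mem {n : ℕ} (Vs : Fin n → Finset V)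
    (hdisj : ∀ i j, i ≠ j → Disjoint (Vs i) (Vs j))
    (Ks : Fin n → Set (Finset V)) (hcx : ∀ j, IsComplexOn (Vs j) (Ks j))
    (j : Fin n) {A : Finset V} (hA : A ∈ joinOf n Ks) (hAV : A ⊆ Vs j) :
    A ∈ Ks j := by
  obtain ⟨B, hB, rfl⟩ := hA
  apply (hcx j).2.2 _ (B j) _ (hB j)
  intro v hv
  obtain ⟨k, _, hvk⟩ := Finset.mem_biUnion.mp hv
  by_cases hkj : k = j
  · exact hkj ▸ hvk
  · exact absurd (hAV hv) (Finset.disjoint_left.mp (hdisj k j hkj) ((hcx k).2.1 _ (hB k) hvk))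

lemma rho_set_bddAbove (S : Finset V) (K : Set (Finset V))
    (hp : ∃ A : Finset V, A ⊆ S ∧ A ∉ K) :
    BddAbove {α : ℝ | 0 ≤ α ∧ ∃ μ : V → ℝ, ProbOn S μ ∧ sublevel S μ α ⊆ K} := by
  obtain ⟨A, hAS, hAK⟩ := hp
  refine ⟨1, fun α hα => ?_⟩
  obtain ⟨hα0, μ, ⟨hμ0, hμ1⟩, hsub⟩ := hα
  by_contra h
  push_neg at h
  apply hAK
  apply hsub
  refine ⟨hAS, ?_⟩
  calc ∑ v ∈ A, μ v ≤ ∑ v ∈ S, μ v :=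
        Finset.sum_le_sum_of_subset_of_nonneg hAS (fun v _ _ => hμ0 v)
    _ = 1 := hμ1
    _ ≤ α := h.le

lemma rho_nonneg (S : Finset V) (K : Set (Finset V))
    (hK : (∅ : Finset V) ∈ K) (hS : S.Nonempty)
    (hp : ∃ A : Finset V, A ⊆ S ∧ A ∉ K) :
    0 ≤ rhoR S K := by
  apply le_csSup (rho_set_bddAbove S K hp)
  refine ⟨le_refl 0, fun _ => (S.card : ℝ)⁻¹, ⟨fun v => by positivity, ?_⟩, ?_⟩
  · rw [Finset.sum_const, nsmul_eq_mul, mul_inv_cancel₀]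
    exact_mod_cast (Finset.card_pos.mpr hS).ne'
  · rintro A ⟨hAS, hsum⟩
    rw [Finset.sum_const, nsmul_eq_mul] at hsum
    have hc : (0:ℝ) < (S.card : ℝ)⁻¹ := by
      have := Finset.card_pos.mpr hS
      positivity
    have : (A.card : ℝ) ≤ 0 := by
      by_contra h
      push_neg at h
      exact absurd hsum (not_le.mpr (mul_pos h hc))
    have : A.card = 0 := by exact_mod_cast le_antisymm this (by positivity)
    rw [Finset.card_eq_zero.mp this]
    exact hK

theorem rho_join_le (n : ℕ) (hn : 0 < n) (Vs : Fin n → Finset V)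
    (hdisj : ∀ i j, i ≠ j → Disjoint (Vs i) (Vs j))
    (Ks : Fin n → Set (Finset V)) (hcx : ∀ j, IsComplexOn (Vs j) (Ks j))
    (hproper : ∀ j, ∃ A : Finset V, A ⊆ Vs j ∧ A ∉ Ks j) :
    rhoR (Finset.univ.biUnion Vs) (joinOf n Ks) ≤
      (1 / (n : ℝ)) *
        (Finset.univ.sup' (Finset.univ_nonempty_iff.mpr (Fin.pos_iff_nonempty.mp hn))
          fun j => rhoR (Vs j) (Ks j)) := by
  have hne : (Finset.univ : Finset (Fin n)).Nonempty :=
    Finset.univ_nonempty_iff.mpr (Fin.pos_iff_nonempty.mp hn)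
  have hnR : (0:ℝ) < n := by exact_mod_cast hn
  have hprop' : ∀ j, ∃ A : Finset V, A ⊆ Vs j ∧ A ∉ Ks j := hproper
  have hVne : ∀ j, (Vs j).Nonempty := by
    intro j
    obtain ⟨A, hAS, hAK⟩ := hproper j
    rcases A.eq_empty_or_nonempty with rfl | hA
    · exact absurd (hcx j).1 hAK
    · exact hA.mono hAS
  have hmax0 : 0 ≤ Finset.univ.sup' hne fun j => rhoR (Vs j) (Ks j) := by
    obtain ⟨j, hj⟩ := hne
    exact le_trans (rho_nonneg (Vs j) (Ks j) (hcx j).1 (hVne j) (hproper j))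
      (Finset.le_sup' (fun j => rhoR (Vs j) (Ks j)) hj)
  apply Real.sSup_le _ (by positivity)
  rintro α ⟨hα0, μ, ⟨hμ0, hμ1⟩, hsub⟩
  -- total mass splits over the parts
  have hpd : ((Finset.univ : Finset (Fin n)) : Set (Fin n)).PairwiseDisjoint Vs := by
    intro i _ j _ hij
    exact hdisj i j hij
  have hsum : ∑ j, ∑ v ∈ Vs j, μ v = 1 := by
    rw [← Finset.sum_biUnion hpd]; exact hμ1
  -- choose j with small mass
  have hex : ∃ j ∈ Finset.univ, ∑ v ∈ Vs j, μ v ≤ 1 / (n : ℝ) := by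
    apply Finset.exists_le_of_sum_le hne
    rw [hsum, Finset.sum_const, nsmul_eq_mul, Finset.card_univ, Fintype.card_fin,
      mul_one_div, div_self hnR.ne']
  obtain ⟨j, -, hjle⟩ := hex
  set c : ℝ := ∑ v ∈ Vs j, μ v with hc
  have hc0 : 0 ≤ c := Finset.sum_nonneg fun v _ => hμ0 v
  have hVsub : Vs j ⊆ Finset.univ.biUnion Vs := Finset.subset_biUnion_of_mem Vs (Finset.mem_univ j)
  have hcpos : 0 < c := by
    rcases hc0.lt_or_eq with h | h
    · exact h
    obtain ⟨A, hAS, hAK⟩ := hproper j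
    exfalso
    apply hAK
    apply join_subset_mem Vs hdisj Ks hcx j (hsub ?_) hAS
    refine ⟨hAS.trans hVsub, ?_⟩
    calc ∑ v ∈ A, μ v ≤ ∑ v ∈ Vs j, μ v :=
          Finset.sum_le_sum_of_subset_of_nonneg hAS (fun v _ _ => hμ0 v)
      _ = 0 := h.symm ▸ rfl
      _ ≤ α := hα0
  -- scaled measure witnesses n·α ≤ rhoR (Vs j) (Ks j)
  have hβmem : α / c ∈ {β : ℝ | 0 ≤ β ∧ ∃ ν : V → ℝ, ProbOn (Vs j) ν ∧ sublevel (Vs j) ν β ⊆ Ks j} := by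
    refine ⟨div_nonneg hα0 hc0, fun v => μ v / c, ⟨fun v => div_nonneg (hμ0 v) hc0, ?_⟩, ?_⟩
    · rw [← Finset.sum_div, ← hc, div_self hcpos.ne']
    · rintro A ⟨hAS, hAsum⟩
      rw [← Finset.sum_div, div_le_div_iff_of_pos_right hcpos] at hAsum
      exact join_subset_mem Vs hdisj Ks hcx j (hsub ⟨hAS.trans hVsub, hAsum⟩) hAS
  have hβle : α / c ≤ rhoR (Vs j) (Ks j) :=
    le_csSup (rho_set_bddAbove (Vs j) (Ks j) (hproper j)) hβmem
  have hnα : α * n ≤ α / c := by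
    calc α * n = α / (1 / n) := by field_simp
      _ ≤ α / c := div_le_div_of_nonneg_left hα0 hcpos hjle
  have : α * n ≤ Finset.univ.sup' hne fun j => rhoR (Vs j) (Ks j) :=
    le_trans (hnα.trans hβle) (Finset.le_sup' (fun j => rhoR (Vs j) (Ks j)) (Finset.mem_univ j))
  rw [one_div, inv_mul_eq_div, le_div_iff₀ hnR]
  convert this using 2
end
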